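/- arXiv:2210.12745 — 2 statements merged into one kernel-verified Lean document; each statement's English description precedes it below -/
import Mathlib

section
/- Catalan's identity for generalized balancing-Lucas numbers: for integers n ≥ r ≥ 0, C_{k,n+r}·C_{k,n−r} − C_{k,n}² = 8·(k−1)^{n−r+1}·B_{k,r}². -/
def B (k : ℤ) : ℕ → ℤ
  | 0 => 0
  | 1 => 1
  | (n+2) => 3*k * B k (n+1) + (1-k) * B k n
def C (k : ℤ) : ℕ → ℤ
  | 0 => 1
  | 1 => 3
  | (n+2) => 3*k * C k (n+1) + (1-k) * C k n

lemma cassini (k : ℤ) : ∀ a, C k (a+2) * C k a - (C k (a+1))^2 = 8 * (k-1)^(a+1) := by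
  intro a
  induction a with
  | zero => simp [C]; ring
  | succ a ih =>
    have h1 : C k (a+3) = 3*k * C k (a+2) + (1-k) * C k (a+1) := rfl
    have h2 : C k (a+2) = 3*k * C k (a+1) + (1-k) * C k a := rfl
    have : C k (a+1+2) * C k (a+1) - (C k (a+1+1))^2
        = (k-1) * (C k (a+2) * C k a - (C k (a+1))^2) := by
      show C k (a+3) * C k (a+1) - (C k (a+2))^2 = _
      rw [h1, h2]; ring
    rw [this, ih]; ring

lemma addC (k : ℤ) : ∀ s a, C k (a+s+1) = C k (a+1) * B k (s+1) + (1-k) * C k a * B k s := by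
  intro s
  induction s using Nat.twoStepInduction with
  | zero => intro a; simp [B]
  | one =>
    intro a
    have hB2 : B k 2 = 3*k := by simp [B]
    show C k (a+2) = _
    have h2 : C k (a+2) = 3*k * C k (a+1) + (1-k) * C k a := rfl
    rw [h2, hB2]; simp [B]; ring
  | more s ih1 ih2 =>
    intro a
    have h1 : C k (a+s+3) = 3*k * C k (a+s+2) + (1-k) * C k (a+s+1) := rfl
    have hB3 : B k (s+3) = 3*k * B k (s+2) + (1-k) * B k (s+1) := rfl
    have e1 : a + (s+2) + 1 = a + s + 3 := by ring
    have e2 : a + (s+1) + 1 = a + s + 2 := by ring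
    rw [e1, h1]
    have i1 := ih1 a
    have i2 := ih2 a
    have hBr : B k (s+2) = 3*k * B k (s+1) + (1-k) * B k s := rfl
    have e0 : s+1+1 = s+2 := by omega
    rw [e2, e0] at i2
    rw [i1, i2, hB3]
    linear_combination (k-1) * C k a * hBr

lemma addB (k : ℤ) : ∀ s m, B k (m+s+1) = B k (m+1) * B k (s+1) + (1-k) * B k m * B k s := by
  intro s
  induction s using Nat.twoStepInduction with
  | zero => intro m; simp [B]
  | one =>
    intro m
    have hB2 : B k 2 = 3*k := by simp [B]
    show B k (m+2) = _
    have h2 : B k (m+2) = 3*k * B k (m+1) + (1-k) * B k m := rfl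
    rw [h2, hB2]; simp [B]; ring
  | more s ih1 ih2 =>
    intro m
    have h1 : B k (m+s+3) = 3*k * B k (m+s+2) + (1-k) * B k (m+s+1) := rfl
    have hB3 : B k (s+3) = 3*k * B k (s+2) + (1-k) * B k (s+1) := rfl
    have e1 : m + (s+2) + 1 = m + s + 3 := by ring
    have e2 : m + (s+1) + 1 = m + s + 2 := by ring
    rw [e1, h1]
    have i1 := ih1 m
    have i2 := ih2 m
    have hBr : B k (s+2) = 3*k * B k (s+1) + (1-k) * B k s := rfl
    have e0 : s+1+1 = s+2 := by omega
    rw [e2, e0] at i2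
    rw [i1, i2, hB3]
    linear_combination (k-1) * B k m * hBr

theorem stmt8 (k : ℤ) (hk : 1 ≤ k) (n r : ℕ) (h : r ≤ n) :
    C k (n+r) * C k (n-r) - (C k n) ^ 2 = 8 * (k-1) ^ (n-r+1) * (B k r) ^ 2 := by
  obtain ⟨a, rfl⟩ := Nat.le.dest h
  match r with
  | 0 => simp [B]; ring
  | t+1 =>
    have e1 : t+1+a+(t+1) = a + (2*t+1) + 1 := by ring
    have e2 : t+1+a - (t+1) = a := by omega
    have e3 : t+1+a = a + t + 1 := by ring
    have e4 : 2*t+1+1 = (t+1)+t+1 := by ring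
    have e5 : 2*t+1 = t+t+1 := by ring
    rw [e1, e2, e3, addC k (2*t+1) a, addC k t a, e4, e5,
        addB k t (t+1), addB k t t]
    have hB2 : B k (t+2) = 3*k * B k (t+1) + (1-k) * B k t := rfl
    have hcass := cassini k a
    have hC2 : C k (a+2) = 3*k * C k (a+1) + (1-k) * C k a := rfl
    rw [hC2] at hcass
    rw [hB2]
    linear_combination (B k (t+1))^2 * hcass
end

section
/- d'Ocagne's identity 2: for integers m ≥ n ≥ 0, C_{k,m}·C_{k,n+1} − C_{k,n}·C_{k,m+1} = −8·(k−1)^{n+1}·B_{k,m−n}. -/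
lemma aux1 (k : ℤ) (d : ℕ) : 3 * C k d - C k (d+1) = -8 * (k-1) * B k d := by
  induction d using Nat.twoStepInduction with
  | zero => simp [B, C]
  | one => simp [B, C]; ring
  | more d ih1 ih2 =>
    have e : d + 2 + 1 = d + 1 + 2 := by omega
    rw [e]
    simp only [B, C] at ih1 ih2 ⊢
    linear_combination (3*k) * ih2 + (1-k) * ih1

theorem stmt10 (k : ℤ) (hk : 1 ≤ k) (m n : ℕ) (h : n ≤ m) :
    C k m * C k (n+1) - C k n * C k (m+1) = -8 * (k-1) ^ (n+1) * B k (m-n) := by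
  obtain ⟨d, rfl⟩ := Nat.exists_eq_add_of_le h
  rw [Nat.add_sub_cancel_left]
  induction n with
  | zero =>
    simp only [Nat.zero_add, C]
    linear_combination aux1 k d
  | succ n ih =>
    have e1 : n + 1 + d = n + d + 1 := by omega
    rw [e1]
    simp only [C]
    linear_combination (k-1) * ih (by omega)
end
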